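/- Fix T > 0, m > 0, c > 0 and c′ ≥ 0, and let h : [0, T) → ℝ be continuous with c/(T−t) ≤ h_t ≤ c/(T−t) + c′ for all t ∈ [0, T). Define w_t = (h_t/h_0)^m · exp(−(m/(m+1)) ∫₀ᵗ h_s ds). Then there exist constants K₁, K₂ > 0 such that K₁ · (T−t)^((m/(m+1))(c−(m+1))) ≤ w_t ≤ K₂ · (T−t)^((m/(m+1))(c−(m+1))) for all t ∈ [0, T). -/

import Mathlib

open Real MeasureTheory Set

/-!
Everything is compared on the logarithmic scale. Integrating the two-sided bound on `h` gives
`∫₀ᵗ h = c log (T / (T - t)) + O(1)`, so `exp (-(m/(m+1)) ∫₀ᵗ h) ≍ (T - t)^(mc/(m+1))`, while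
`h t ≍ 1 / (T - t)` gives `(h t / h 0)^m ≍ (T - t)^(-m)`. Since `m = (m/(m+1)) (m+1)`, the
exponents add up to `(m/(m+1)) (c - (m+1))`, and the `O(1)` errors exponentiate to `K₁`, `K₂`.
-/

theorem exists_mul_le_of_log_sub_mem_Icc {α : Type*} {S : Set α} {f g : α → ℝ} {a b : ℝ}
    (hf : ∀ x ∈ S, 0 < f x) (hg : ∀ x ∈ S, 0 < g x)
    (hfg : ∀ x ∈ S, log (f x) - log (g x) ∈ Icc a b) :
    ∃ K₁ K₂ : ℝ, 0 < K₁ ∧ 0 < K₂ ∧ ∀ x ∈ S, K₁ * g x ≤ f x ∧ f x ≤ K₂ * g x := by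
  refine ⟨exp a, exp b, exp_pos a, exp_pos b, fun x hx => ?_⟩
  have hfx : f x = exp (log (f x) - log (g x)) * g x := by
    rw [exp_sub, exp_log (hf x hx), exp_log (hg x hx), div_mul_cancel₀ _ (hg x hx).ne']
  obtain ⟨ha, hb⟩ := hfg x hx
  have := (hg x hx).le
  rw [hfx]
  exact ⟨by gcongr, by gcongr⟩

theorem log_div_rpow_mul_exp {x y : ℝ} (hx : 0 < x) (hy : 0 < y) (m z : ℝ) :
    log ((x / y) ^ m * exp z) = m * (log x - log y) + z := by
  rw [log_mul (rpow_pos_of_pos (div_pos hx hy) m).ne' (exp_pos z).ne', log_rpow (div_pos hx hy),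
    log_div hx.ne' hy.ne', log_exp]

theorem integral_div_sub_eq_log {T t : ℝ} (c : ℝ) (ht : 0 ≤ t) (htT : t < T) :
    ∫ s in (0 : ℝ)..t, c / (T - s) = c * log (T / (T - t)) := by
  simp_rw [div_eq_mul_inv c]
  rw [intervalIntegral.integral_const_mul,
    intervalIntegral.integral_comp_sub_left (fun x => x⁻¹) T, sub_zero,
    integral_inv_of_pos (by linarith) (by linarith)]

section BlowUp

variable {T c c' : ℝ} {h : ℝ → ℝ} {t : ℝ}

theorem integral_mem_Icc_of_blowup (hcont : ContinuousOn h (Ico 0 T))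
    (hbound : ∀ t ∈ Ico (0 : ℝ) T, c / (T - t) ≤ h t ∧ h t ≤ c / (T - t) + c')
    (ht : t ∈ Ico 0 T) :
    ∫ s in (0 : ℝ)..t, h s ∈ Icc (c * log (T / (T - t))) (c * log (T / (T - t)) + c' * t) := by
  obtain ⟨ht0, htT⟩ := ht
  have hsub : Icc 0 t ⊆ Ico 0 T := Icc_subset_Ico_right htT
  have hh : IntervalIntegrable h volume 0 t :=
    (hcont.mono (by rwa [uIcc_of_le ht0])).intervalIntegrable
  have hcT : IntervalIntegrable (fun s => c / (T - s)) volume 0 t := by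
    refine (continuousOn_const.div (continuousOn_const.sub continuousOn_id) ?_).intervalIntegrable
    intro s hs
    rw [uIcc_of_le ht0] at hs
    exact (sub_pos.2 (hs.2.trans_lt htT)).ne'
  rw [← integral_div_sub_eq_log c ht0 htT]
  constructor
  · exact intervalIntegral.integral_mono_on ht0 hcT hh fun s hs => (hbound s (hsub hs)).1
  · calc ∫ s in (0 : ℝ)..t, h s ≤ ∫ s in (0 : ℝ)..t, (c / (T - s) + c') :=
          intervalIntegral.integral_mono_on ht0 hh (hcT.add intervalIntegrable_const)
            fun s hs => (hbound s (hsub hs)).2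
      _ = _ := by
          rw [intervalIntegral.integral_add hcT intervalIntegrable_const,
            intervalIntegral.integral_const, smul_eq_mul, sub_zero, mul_comm]

theorem log_mem_Icc_of_blowup (hc : 0 < c) (hc' : 0 ≤ c')
    (hbound : ∀ t ∈ Ico (0 : ℝ) T, c / (T - t) ≤ h t ∧ h t ≤ c / (T - t) + c')
    (ht : t ∈ Ico 0 T) :
    log (h t) ∈ Icc (log c - log (T - t)) (log (c + c' * T) - log (T - t)) := by
  have hTt : 0 < T - t := sub_pos.2 ht.2
  have hT : 0 < T := ht.1.trans_lt ht.2
  obtain ⟨hlow, hupp⟩ := hbound t ht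
  have hupp' : h t ≤ (c + c' * T) / (T - t) := by
    calc h t ≤ c / (T - t) + c' := hupp
      _ ≤ (c + c' * T) / (T - t) := by
          rw [add_div, mul_div_assoc]
          gcongr
          exact le_mul_of_one_le_right hc' ((one_le_div hTt).2 (by linarith [ht.1]))
  rw [← log_div hc.ne' hTt.ne', ← log_div (by positivity) hTt.ne']
  exact ⟨log_le_log (by positivity) hlow, log_le_log ((div_pos hc hTt).trans_le hlow) hupp'⟩

theorem log_weight_sub_log_rpow_mem_Icc {m : ℝ} (hm : 0 < m) (hc : 0 < c) (hc' : 0 ≤ c')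
    (hcont : ContinuousOn h (Ico 0 T))
    (hbound : ∀ t ∈ Ico (0 : ℝ) T, c / (T - t) ≤ h t ∧ h t ≤ c / (T - t) + c')
    (ht : t ∈ Ico 0 T) :
    m * (log (h t) - log (h 0)) + -(m / (m + 1)) * (∫ s in (0 : ℝ)..t, h s)
        - m / (m + 1) * (c - (m + 1)) * log (T - t) ∈
      Icc (m * log c - m * log (h 0) - m / (m + 1) * c * log T - m / (m + 1) * (c' * T))
        (m * log (c + c' * T) - m * log (h 0) - m / (m + 1) * c * log T) := by
  set β := m / (m + 1)
  have hβm : β * (m + 1) = m := div_mul_cancel₀ m (by linarith)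
  have hβ : 0 ≤ β := by positivity
  have hTt : 0 < T - t := sub_pos.2 ht.2
  obtain ⟨hI₁, hI₂⟩ := integral_mem_Icc_of_blowup hcont hbound ht
  obtain ⟨hl₁, hl₂⟩ := log_mem_Icc_of_blowup hc hc' hbound ht
  rw [log_div (hTt.trans_le (by linarith [ht.1])).ne' hTt.ne'] at hI₁ hI₂
  set L := log (T - t)
  set I := ∫ s in (0 : ℝ)..t, h s
  -- `β * (m + 1) = m` absorbs the factor `(T - t)^(-m)` of `(h t)^m` into the target exponent.
  have hsplit : m * (log (h t) - log (h 0)) + -β * I - β * (c - (m + 1)) * L =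
      m * (log (h t) + L) - m * log (h 0) - β * (I - c * (log T - L)) - β * c * log T := by
    linear_combination L * hβm
  have hct : c' * t ≤ c' * T := mul_le_mul_of_nonneg_left ht.2.le hc'
  have hpow₁ : m * log c ≤ m * (log (h t) + L) := mul_le_mul_of_nonneg_left (by linarith) hm.le
  have hpow₂ : m * (log (h t) + L) ≤ m * log (c + c' * T) :=
    mul_le_mul_of_nonneg_left (by linarith) hm.le
  have hexp₁ : 0 ≤ β * (I - c * (log T - L)) := mul_nonneg hβ (by linarith)
  have hexp₂ : β * (I - c * (log T - L)) ≤ β * (c' * T) :=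
    mul_le_mul_of_nonneg_left (by linarith) hβ
  rw [hsplit]
  constructor <;> linarith

end BlowUp

/-- For a continuous reversion rate `h` on `[0,T)` with the two-sided blow-up bound
`c/(T−t) ≤ h_t ≤ c/(T−t) + c′`, the weight
`w_t = (h_t/h_0)^m·exp(−(m/(m+1))∫₀ᵗ h_s ds)` satisfies the two-sided power-law bound
`K₁(T−t)^((m/(m+1))(c−(m+1))) ≤ w_t ≤ K₂(T−t)^((m/(m+1))(c−(m+1)))` on `[0,T)` for some
constants `K₁, K₂ > 0`. -/
theorem stmt_16 (T m c c' : ℝ) (hT : 0 < T) (hm : 0 < m) (hc : 0 < c) (hc' : 0 ≤ c')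
    (h : ℝ → ℝ) (hcont : ContinuousOn h (Ico 0 T))
    (hbound : ∀ t ∈ Ico (0 : ℝ) T, c / (T - t) ≤ h t ∧ h t ≤ c / (T - t) + c')
    (w : ℝ → ℝ)
    (hw : ∀ t : ℝ, w t =
      (h t / h 0) ^ m * Real.exp (-(m / (m + 1)) * ∫ s in (0 : ℝ)..t, h s)) :
    ∃ K₁ K₂ : ℝ, 0 < K₁ ∧ 0 < K₂ ∧
      ∀ t ∈ Ico (0 : ℝ) T,
        K₁ * (T - t) ^ ((m / (m + 1)) * (c - (m + 1))) ≤ w t ∧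
        w t ≤ K₂ * (T - t) ^ ((m / (m + 1)) * (c - (m + 1))) := by
  have hpos : ∀ t ∈ Ico (0 : ℝ) T, 0 < h t := fun t ht =>
    (div_pos hc (sub_pos.2 ht.2)).trans_le (hbound t ht).1
  have h0 : 0 < h 0 := hpos 0 ⟨le_rfl, hT⟩
  refine exists_mul_le_of_log_sub_mem_Icc
    (fun t ht => by have := hpos t ht; rw [hw t]; positivity)
    (fun t ht => rpow_pos_of_pos (sub_pos.2 ht.2) _) fun t ht => by
      rw [hw t, log_div_rpow_mul_exp (hpos t ht) h0, log_rpow (sub_pos.2 ht.2)]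
      exact log_weight_sub_log_rpow_mem_Icc hm hc hc' hcont hbound ht
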